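/- Let q be a prime power and s ≥ 1, d integers with d < s·q. If F, G are polynomials in F_q[X_1,...,X_m] of total degree at most d such that H_i(F)(P) = H_i(G)(P) for all points P ∈ F_q^m and all multi-indices i with |i| < s, then F = G. That is, the order-s evaluation map ev^s on F_q[X]_d is injective. -/

import Mathlib

/-!
Let `P = F - G`, so `deg P < s q` and every Hasse derivative of `P` of order `< s` vanishes on
all of `𝔽_q^m`. Induct on `m`, viewing `P` as a polynomial in `X₀` of degree `t` with leading
coefficient `P_t ∈ 𝔽_q[X₁, …, X_{m-1}]`, so that `deg P_t ≤ deg P - t`. If `(H_i P_t)(a) ≠ 0`,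
then `g(X₀) = (H_{(0,i)} P)(X₀, a)` has degree `t` and, since `H_j g (b) = (H_{(j,i)} P)(b, a)`,
it vanishes to order `s - |i|` at each of the `q` points `b ∈ 𝔽_q`; hence `q (s - |i|) ≤ t`.
So `P_t` vanishes to order `s' = s - ⌊t/q⌋` everywhere, while `deg P_t < s q - t ≤ s' q`.
By induction `P_t = 0`, which is absurd unless `P = 0`.
-/

/-- The `i`-th Hasse derivative of a multivariate polynomial `F`: the coefficient of `Z^i`
in `F(X + Z)`. -/
noncomputable def mvHasseDeriv {K : Type*} [CommRing K] {m : ℕ} (i : Fin m →₀ ℕ)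
    (F : MvPolynomial (Fin m) K) : MvPolynomial (Fin m) K :=
  MvPolynomial.coeff i
    (MvPolynomial.eval₂ (MvPolynomial.C.comp MvPolynomial.C)
      (fun j => MvPolynomial.C (MvPolynomial.X j) + MvPolynomial.X j) F)

theorem Finsupp.cons_add_cons {M : Type*} [AddZeroClass M] {n : ℕ} (a b : M)
    (f g : Fin n →₀ M) :
    f.cons a + g.cons b = (f + g).cons (a + b) := by
  ext t
  refine Fin.cases ?_ (fun t => ?_) t <;> simp

theorem Finsupp.degree_cons {M : Type*} [AddCommMonoid M] {n : ℕ} (j : M) (i : Fin n →₀ M) :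
    (i.cons j).degree = j + i.degree := by
  simp only [Finsupp.degree_eq_sum, Fin.sum_univ_succ, Finsupp.cons_zero, Finsupp.cons_succ]

namespace Polynomial

theorem hasseDeriv_map {R S : Type*} [Semiring R] [Semiring S] (φ : R →+* S) (j : ℕ)
    (p : R[X]) :
    hasseDeriv j (p.map φ) = (hasseDeriv j p).map φ := by
  ext k
  simp only [hasseDeriv_coeff, coeff_map, map_mul, map_natCast]

theorem X_sub_C_pow_dvd_of_hasseDeriv_eval_eq_zero {R : Type*} [CommRing R]
    {f : R[X]} {b : R} {r : ℕ} (h : ∀ j < r, (hasseDeriv j f).eval b = 0) :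
    (X - C b) ^ r ∣ f := by
  rw [← sum_taylor_eq f b, Polynomial.sum]
  refine Finset.dvd_sum fun j hj => Dvd.dvd.mul_left (pow_dvd_pow _ ?_) _
  by_contra! hjr
  exact mem_support_iff.1 hj (by rw [taylor_coeff, h j hjr])

theorem card_mul_le_natDegree_of_forall_X_sub_C_pow_dvd {R : Type*} [CommRing R]
    [IsDomain R] [Fintype R] {g : R[X]} (hg : g ≠ 0) {r : ℕ} (h : ∀ b, (X - C b) ^ r ∣ g) :
    Fintype.card R * r ≤ g.natDegree := by
  classical
  have hroots : r • (Finset.univ : Finset R).val ≤ g.roots :=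
    Multiset.le_iff_count.2 fun b => by
      rw [Multiset.count_nsmul, Multiset.count_eq_one_of_mem Finset.univ.nodup (Finset.mem_univ b),
        mul_one, count_roots]
      exact (le_rootMultiplicity_iff hg).2 (h b)
  calc Fintype.card R * r = Multiset.card (r • (Finset.univ : Finset R).val) := by
        rw [Multiset.card_nsmul, Finset.card_val, Finset.card_univ, mul_comm]
    _ ≤ Multiset.card g.roots := Multiset.card_le_card hroots
    _ ≤ g.natDegree := card_roots' g

end Polynomial

namespace MvPolynomial

variable {K : Type*} [CommRing K] {m : ℕ}

theorem mvHasseDeriv_monomial (i u : Fin m →₀ ℕ) (c : K) :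
    mvHasseDeriv i (monomial u c) =
      if i ≤ u then monomial (u - i) (((∏ t, (u t).choose (i t) : ℕ) : K) * c) else 0 := by
  -- Expand each `(X t + Z t) ^ u t` binomially; of the resulting product of sums only the term
  -- with `Z`-exponent vector `i` contributes to the coefficient of `Z ^ i`.
  have hexpand : ∀ t, (C (X t) + X t : MvPolynomial (Fin m) (MvPolynomial (Fin m) K)) ^ u t =
      ∑ k ∈ Finset.range (u t + 1),
        monomial (Finsupp.single t k)
          (((u t).choose k : MvPolynomial (Fin m) K) * X t ^ (u t - k)) := by
    intro t
    rw [add_comm, add_pow]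
    refine Finset.sum_congr rfl fun k _ => ?_
    rw [← C_mul_X_pow_eq_monomial, map_mul, map_natCast, map_pow]
    ring
  simp only [mvHasseDeriv, eval₂_monomial, Finsupp.prod_fintype _ _ (fun t => pow_zero _),
    hexpand, Finset.prod_univ_sum, ← monomial_sum_prod, ← Finsupp.equivFunOnFinite_symm_eq_sum,
    coeff_sum, RingHom.comp_apply, coeff_C_mul, coeff_monomial]
  have hmem : (Finsupp.equivFunOnFinite i ∈ Fintype.piFinset fun t => Finset.range (u t + 1)) ↔
      i ≤ u := by
    simp only [Fintype.mem_piFinset, Finset.mem_range, Nat.lt_succ_iff, Finsupp.le_def]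
    rfl
  simp only [Equiv.symm_apply_eq, Finset.sum_ite_eq', hmem]
  split_ifs with hle
  · rw [Finset.prod_mul_distrib, ← Nat.cast_prod, monomial_eq,
      Finsupp.prod_fintype _ _ (fun t => pow_zero _)]
    simp only [Finsupp.equivFunOnFinite_apply, Finsupp.tsub_apply, map_mul, map_natCast]
    ring
  · rw [mul_zero]

noncomputable def mvHasseDerivAddHom (i : Fin m →₀ ℕ) :
    MvPolynomial (Fin m) K →+ MvPolynomial (Fin m) K :=
  (coeffAddMonoidHom i).comp (eval₂Hom (C.comp C) fun j => C (X j) + X j).toAddMonoidHom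

theorem mvHasseDeriv_zero (i : Fin m →₀ ℕ) :
    mvHasseDeriv i (0 : MvPolynomial (Fin m) K) = 0 :=
  map_zero (mvHasseDerivAddHom i)

theorem mvHasseDeriv_add (i : Fin m →₀ ℕ) (P Q : MvPolynomial (Fin m) K) :
    mvHasseDeriv i (P + Q) = mvHasseDeriv i P + mvHasseDeriv i Q :=
  map_add (mvHasseDerivAddHom i) P Q

theorem mvHasseDeriv_sub (i : Fin m →₀ ℕ) (P Q : MvPolynomial (Fin m) K) :
    mvHasseDeriv i (P - Q) = mvHasseDeriv i P - mvHasseDeriv i Q :=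
  map_sub (mvHasseDerivAddHom i) P Q

theorem mvHasseDeriv_nsmul (i : Fin m →₀ ℕ) (k : ℕ) (P : MvPolynomial (Fin m) K) :
    mvHasseDeriv i (k • P) = k • mvHasseDeriv i P :=
  map_nsmul (mvHasseDerivAddHom i) k P

theorem coeff_mvHasseDeriv (i v : Fin m →₀ ℕ) (P : MvPolynomial (Fin m) K) :
    coeff v (mvHasseDeriv i P) =
      ((∏ t, ((v + i) t).choose (i t) : ℕ) : K) * coeff (v + i) P := by
  induction P using induction_on' with
  | add p q hp hq => rw [mvHasseDeriv_add, coeff_add, hp, hq, coeff_add, mul_add]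
  | monomial u c =>
    rw [mvHasseDeriv_monomial, coeff_monomial]
    split_ifs with hle heq heq
    · rw [coeff_monomial, if_pos ((tsub_eq_iff_eq_add_of_le hle).2 heq), heq]
    · rw [coeff_monomial, if_neg, mul_zero]
      rwa [tsub_eq_iff_eq_add_of_le hle]
    · exact absurd (heq ▸ le_add_self) hle
    · rw [coeff_zero, mul_zero]

theorem mvHasseDeriv_zero' (P : MvPolynomial (Fin m) K) : mvHasseDeriv 0 P = P := by
  ext v
  simp [coeff_mvHasseDeriv]

theorem coeff_finSuccEquiv_mvHasseDeriv_cons {n : ℕ} (j : ℕ) (i : Fin n →₀ ℕ)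
    (P : MvPolynomial (Fin (n + 1)) K) (k : ℕ) :
    (finSuccEquiv K n (mvHasseDeriv (i.cons j) P)).coeff k =
      mvHasseDeriv i ((Polynomial.hasseDeriv j (finSuccEquiv K n P)).coeff k) := by
  ext l
  rw [finSuccEquiv_coeff_coeff, coeff_mvHasseDeriv, coeff_mvHasseDeriv,
    Polynomial.hasseDeriv_coeff, ← map_natCast C, coeff_C_mul, finSuccEquiv_coeff_coeff,
    Finsupp.cons_add_cons, Fin.prod_univ_succ]
  simp only [Finsupp.cons_zero, Finsupp.cons_succ, Nat.cast_mul]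
  ring

theorem hasseDeriv_finSuccEquiv_mvHasseDeriv_cons_zero {n : ℕ} (j : ℕ) (i : Fin n →₀ ℕ)
    (P : MvPolynomial (Fin (n + 1)) K) :
    Polynomial.hasseDeriv j (finSuccEquiv K n (mvHasseDeriv (i.cons 0) P)) =
      finSuccEquiv K n (mvHasseDeriv (i.cons j) P) := by
  ext k : 1
  rw [Polynomial.hasseDeriv_coeff, coeff_finSuccEquiv_mvHasseDeriv_cons,
    coeff_finSuccEquiv_mvHasseDeriv_cons, Polynomial.hasseDeriv_zero, LinearMap.id_apply,
    Polynomial.hasseDeriv_coeff, ← nsmul_eq_mul, ← nsmul_eq_mul, mvHasseDeriv_nsmul]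

section FiniteDomain

variable [IsDomain K] [Fintype K]

theorem eval_mvHasseDeriv_leadingCoeff_finSuccEquiv_eq_zero {n s : ℕ}
    {P : MvPolynomial (Fin (n + 1)) K}
    (h : ∀ (a : Fin (n + 1) → K) (i : Fin (n + 1) →₀ ℕ), i.degree < s →
      eval a (mvHasseDeriv i P) = 0)
    (a : Fin n → K) (i : Fin n →₀ ℕ)
    (hi : i.degree < s - (finSuccEquiv K n P).natDegree / Fintype.card K) :
    eval a (mvHasseDeriv i (finSuccEquiv K n P).leadingCoeff) = 0 := by
  by_contra hne
  set Q := finSuccEquiv K n P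
  let g := (finSuccEquiv K n (mvHasseDeriv (i.cons 0) P)).map (eval a)
  have hcoeff : ∀ k, g.coeff k = eval a (mvHasseDeriv i (Q.coeff k)) := fun k => by
    rw [Polynomial.coeff_map, coeff_finSuccEquiv_mvHasseDeriv_cons, Polynomial.hasseDeriv_zero,
      LinearMap.id_apply]
  have hg : g ≠ 0 := fun hg0 => hne (by
    rw [Polynomial.leadingCoeff, ← hcoeff, hg0, Polynomial.coeff_zero])
  have hdeg : g.natDegree ≤ Q.natDegree :=
    Polynomial.natDegree_le_iff_coeff_eq_zero.2 fun k hk => by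
      rw [hcoeff, Polynomial.coeff_eq_zero_of_natDegree_lt hk, mvHasseDeriv_zero, map_zero]
  have hdvd : ∀ b, (Polynomial.X - Polynomial.C b) ^ (s - i.degree) ∣ g := fun b =>
    Polynomial.X_sub_C_pow_dvd_of_hasseDeriv_eval_eq_zero fun j hj => by
      rw [Polynomial.hasseDeriv_map, hasseDeriv_finSuccEquiv_mvHasseDeriv_cons_zero,
        ← eval_eq_eval_mv_eval']
      exact h _ _ (by rw [Finsupp.degree_cons]; omega)
  have hle : s - i.degree ≤ Q.natDegree / Fintype.card K :=
    (Nat.le_div_iff_mul_le Fintype.card_pos).2 <| by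
      rw [mul_comm]
      exact (Polynomial.card_mul_le_natDegree_of_forall_X_sub_C_pow_dvd hg hdvd).trans hdeg
  omega

theorem eq_zero_of_eval_mvHasseDeriv_eq_zero :
    ∀ {n s : ℕ} {P : MvPolynomial (Fin n) K}, P.totalDegree < s * Fintype.card K →
      (∀ (a : Fin n → K) (i : Fin n →₀ ℕ), i.degree < s →
        eval a (mvHasseDeriv i P) = 0) →
      P = 0
  | 0, s, P, hdeg, h => by
    have hs : 0 < s := Nat.pos_of_ne_zero fun hs => by simp [hs] at hdeg
    have := h isEmptyElim 0 (by simpa using hs)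
    rw [mvHasseDeriv_zero', eq_C_of_isEmpty P, eval_C] at this
    rw [eq_C_of_isEmpty P, this, map_zero]
  | n + 1, s, P, hdeg, h => by
    by_contra hP
    set Q := finSuccEquiv K n P
    have hlc : Q.leadingCoeff ≠ 0 :=
      Polynomial.leadingCoeff_ne_zero.2 ((map_ne_zero_iff _ (finSuccEquiv K n).injective).2 hP)
    have hdeg' : Q.leadingCoeff.totalDegree + Q.natDegree ≤ P.totalDegree :=
      totalDegree_coeff_finSuccEquiv_add_le P _ hlc
    refine hlc (eq_zero_of_eval_mvHasseDeriv_eq_zero (s := s - Q.natDegree / Fintype.card K) ?_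
      (eval_mvHasseDeriv_leadingCoeff_finSuccEquiv_eq_zero h))
    have := Nat.div_mul_le_self Q.natDegree (Fintype.card K)
    rw [Nat.sub_mul]
    omega

end FiniteDomain

end MvPolynomial

theorem evs_injective_general {Fq : Type*} [Field Fq] [Fintype Fq] {m s d : ℕ}
    (hd : d < s * Fintype.card Fq)
    (F G : MvPolynomial (Fin m) Fq) (hF : F.totalDegree ≤ d) (hG : G.totalDegree ≤ d)
    (h : ∀ (P : Fin m → Fq) (i : Fin m →₀ ℕ), (i.sum fun _ n => n) < s →
      MvPolynomial.eval P (mvHasseDeriv i F) = MvPolynomial.eval P (mvHasseDeriv i G)) :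
    F = G := by
  refine sub_eq_zero.1 (MvPolynomial.eq_zero_of_eval_mvHasseDeriv_eq_zero (s := s) ?_
    fun a i hi => ?_)
  · exact (MvPolynomial.totalDegree_sub F G).trans_lt ((max_le hF hG).trans_lt hd)
  · rw [MvPolynomial.mvHasseDeriv_sub, map_sub, h a i hi, sub_self]

/-- for `d < s·q`, the order-`s` evaluation map `ev^s` is injective on
polynomials of total degree at most `d`. -/
theorem evs_injective {Fq : Type*} [Field Fq] [Fintype Fq] {m s d : ℕ}
    (hm : 1 ≤ m) (hs : 1 ≤ s) (hd : d < s * Fintype.card Fq)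
    (F G : MvPolynomial (Fin m) Fq) (hF : F.totalDegree ≤ d) (hG : G.totalDegree ≤ d)
    (h : ∀ (P : Fin m → Fq) (i : Fin m →₀ ℕ), (i.sum fun _ n => n) < s →
      MvPolynomial.eval P (mvHasseDeriv i F) = MvPolynomial.eval P (mvHasseDeriv i G)) :
    F = G :=
  evs_injective_general hd F G hF hG h
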